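/- arXiv:2006.16885 — 4 statements merged into one kernel-verified Lean document; each statement's English description precedes it below -/
import Mathlib

section
/- The Laurent polynomial γ = ((1+y)^3 + 3x(1+y)^2 + x^2(1+y)(3+y) + x^3)/(xy) is not mutable with respect to the mutation datum (φ, 1+x) where φ(a,b) = b - 1; that is, writing γ = Σ_k γ_k by the grading φ, the part γ_{-2} (the terms with y-degree -1) is not divisible by (1+x)^2 in ℂ[x^{±1}]. -/
noncomputable section

/-- The ring of Laurent polynomials in two variables over ℂ. -/
abbrev A2 : Type := AddMonoidAlgebra ℂ (ℤ × ℤ)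

def X : A2 := AddMonoidAlgebra.single (1, 0) 1
def Y : A2 := AddMonoidAlgebra.single (0, 1) 1
def Xi : A2 := AddMonoidAlgebra.single (-1, 0) 1
def Yi : A2 := AddMonoidAlgebra.single (0, -1) 1

/-- The part of `f` on the level set `(φ = k)` for `φ(a,b) = b - 1`. -/
def part (f : A2) (k : ℤ) : A2 := AddMonoidAlgebra.ofCoeff (Finsupp.filter (fun p : ℤ × ℤ => p.2 - 1 = k) f.coeff)

/-- `γ = ((1+y)³ + 3x(1+y)² + x²(1+y)(3+y) + x³)/(xy)`. -/
def γ : A2 := ((1 + Y) ^ 3 + 3 * X * (1 + Y) ^ 2 + X ^ 2 * (1 + Y) * (3 + Y) + X ^ 3) * Xi * Yi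

/-!
The level `φ = -1` part of `γ` (its `y⁰`-part) is `3x⁻¹ + 6 + 4x`. Specializing `x ↦ -1` sends
`1 + x` to `0` but this part to `-3 + 6 - 4 = -1`, so `1 + x` does not divide it.
-/

open AddMonoidAlgebra

lemma not_pow_dvd_of_map_eq_zero {F R S : Type*} [Semiring R] [Semiring S] [FunLike F R S]
    [RingHomClass F R S] (φ : F) {g f : R} (hg : φ g = 0) (hf : φ f ≠ 0) {n : ℕ} (hn : n ≠ 0) :
    ¬ g ^ n ∣ f := by
  rintro ⟨q, rfl⟩
  simp [hg, zero_pow hn] at hf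

/-- The specialization `x ↦ u`, `y ↦ 1`. -/
def evalX (u : ℂˣ) : A2 →ₐ[ℂ] ℂ :=
  lift ℂ ℂ (ℤ × ℤ) ((Units.coeHom ℂ).comp <|
    (zpowersHom ℂˣ u).comp (AddMonoidHom.toMultiplicative (AddMonoidHom.fst ℤ ℤ)))

lemma evalX_single (u : ℂˣ) (a : ℤ × ℤ) (c : ℂ) : evalX u (single a c) = c * (u ^ a.1 : ℂˣ) := by
  simp [evalX, lift_single]

lemma part_add (f g : A2) (k : ℤ) : part (f + g) k = part f k + part g k := by
  simp [part, Finsupp.filter_add]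

lemma part_single (a : ℤ × ℤ) (c : ℂ) (k : ℤ) :
    part (single a c) k = if a.2 - 1 = k then single a c else 0 := by
  rw [part, coeff_single]
  split_ifs with h
  · rw [Finsupp.filter_single_of_pos (p := fun p : ℤ × ℤ => p.2 - 1 = k) h, ofCoeff_single]
  · rw [Finsupp.filter_single_of_neg (p := fun p : ℤ × ℤ => p.2 - 1 = k) h, ofCoeff_zero]

lemma gamma_eq : γ =
    single (-1, -1) 1 + single (-1, 0) 3 + single (-1, 1) 3 + single (-1, 2) 1 +
    single (0, -1) 3 + single (0, 0) 6 + single (0, 1) 3 +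
    single (1, -1) 3 + single (1, 0) 4 + single (1, 1) 1 +
    single (2, -1) 1 := by
  have h1 : (1 : A2) = single 0 1 := rfl
  have h3 : (3 : A2) = single 0 3 := rfl
  simp only [γ, X, Y, Xi, Yi, h1, h3, pow_succ, pow_zero, one_mul, mul_add, add_mul,
    single_mul_single]
  norm_num
  -- written as scalar multiples of monomials so that `module` can collect like terms
  have hsmul (a : ℤ × ℤ) (c : ℂ) : single a c = c • single a 1 := by rw [smul_single', mul_one]
  simp only [hsmul _ (3 : ℂ), hsmul _ (4 : ℂ), hsmul _ (6 : ℂ)]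
  module

lemma part_gamma_neg_one : part γ (-1) = single (-1, 0) 3 + single (0, 0) 6 + single (1, 0) 4 := by
  norm_num [gamma_eq, part_add, part_single]

/-- `γ` is not mutable with respect to the mutation datum `(φ, 1+x)` with
`φ(a,b) = b - 1`: there is `k < 0` for which `(1+x)^{-k}` does not divide the
level-`k` part of `γ`. -/
theorem gamma_not_mutable :
    ¬ (∀ k : ℤ, k < 0 → (1 + X) ^ (-k).toNat ∣ part γ k) := by
  intro h
  have hdvd : (1 + X) ^ 1 ∣ part γ (-1) := h (-1) (by norm_num)
  refine not_pow_dvd_of_map_eq_zero (evalX (-1)) ?_ ?_ one_ne_zero hdvd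
  · simp [X, evalX_single]
  · norm_num [part_gamma_neg_one, evalX_single]
end
end

section
/- In the polynomial ring ℂ[t₁,…,t₉] (with the naming t₁=t_{m²₃,₁}, t₂=t_{m²₃,₂}, t₃=t_{m²₂,₂}, t₄=t_{m²₂,₁}, t₅=t_{m¹₃,₁}, t₆=t_{m¹₃,₂}, t₇=t_{m¹₂,₂}, t₈=t_{m¹₂,₁}, t₉=t_u), the radical of the ideal I = (t₅t₉, t₁t₉, t₄t₅ + t₁t₈, t₁t₅, t₂t₅² − t₁²t₆) equals the intersection of the three prime ideals P₁ = (t₅, t₁), P₂ = (t₉, t₅, t₈, t₆), P₃ = (t₉, t₁, t₄, t₂). -/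
noncomputable section

open MvPolynomial

/-- The ideal of the miniversal deformation space: with coordinates
`t₁,…,t₉` named `X 0,…,X 8`, `I = (t₅t₉, t₁t₉, t₄t₅ + t₁t₈, t₁t₅, t₂t₅² − t₁²t₆)`. -/
def I : Ideal (MvPolynomial (Fin 9) ℂ) :=
  Ideal.span {X 4 * X 8, X 0 * X 8, X 3 * X 4 + X 0 * X 7, X 0 * X 4,
              X 1 * X 4 ^ 2 - X 0 ^ 2 * X 5}

def P₁ : Ideal (MvPolynomial (Fin 9) ℂ) := Ideal.span {X 4, X 0}
def P₂ : Ideal (MvPolynomial (Fin 9) ℂ) := Ideal.span {X 8, X 4, X 7, X 5}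
def P₃ : Ideal (MvPolynomial (Fin 9) ℂ) := Ideal.span {X 8, X 0, X 3, X 1}

/-!
Each `Pᵢ` is the kernel of the substitution sending its variables to `0`, hence prime, and it
visibly contains the generators of `I`. Conversely `t₁t₅, t₁t₉, t₅t₉ ∈ I`, and modulo `t₁t₅` the
two remaining generators force `t₄t₅, t₁t₈, t₂t₅, t₁t₆` into `√I`, e.g.
`(t₄t₅)² = t₄t₅ (t₄t₅ + t₁t₈) − t₄t₈ · t₁t₅`. Hence `t₅P₃ + t₁P₂ ⊆ √I`; this ideal contains
`P₁P₂P₃` because `P₁ = (t₅, t₁)`, and `√(P₁P₂P₃) = P₁ ∩ P₂ ∩ P₃`.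
-/

namespace MvPolynomial

variable {σ R : Type*} [CommRing R]

def zeroVars (s : Set σ) [DecidablePred (· ∈ s)] : MvPolynomial σ R →ₐ[R] MvPolynomial σ R :=
  aeval fun i => if i ∈ s then 0 else X i

theorem sub_zeroVars_mem_span_X_image (s : Set σ) [DecidablePred (· ∈ s)]
    (p : MvPolynomial σ R) : p - zeroVars s p ∈ Ideal.span (X '' s) := by
  induction p using MvPolynomial.induction_on with
  | C a => simp [zeroVars]
  | add p q hp hq =>
    rw [map_add, add_sub_add_comm]
    exact Ideal.add_mem _ hp hq
  | mul_X p i hp =>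
    by_cases hi : i ∈ s
    · simpa [zeroVars, hi] using
        Ideal.mul_mem_left _ p (Ideal.subset_span (Set.mem_image_of_mem X hi))
    · simpa [zeroVars, hi, sub_mul] using Ideal.mul_mem_right (X i) _ hp

theorem ker_zeroVars (s : Set σ) [DecidablePred (· ∈ s)] :
    RingHom.ker (zeroVars s : MvPolynomial σ R →ₐ[R] _) = Ideal.span (X '' s) := by
  refine le_antisymm (fun p hp => ?_) (Ideal.span_le.2 ?_)
  · simpa [RingHom.mem_ker.1 hp] using sub_zeroVars_mem_span_X_image s p
  · rintro _ ⟨i, hi, rfl⟩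
    simp [zeroVars, hi]

end MvPolynomial

namespace Ideal

variable {R : Type*} [CommRing R] {J : Ideal R}

theorem span_singleton_mul_span_le_iff {x : R} {S : Set R} :
    span {x} * span S ≤ J ↔ ∀ s ∈ S, x * s ∈ J := by
  simp [span_mul_span', span_le, Set.singleton_mul, Set.subset_def]

theorem mul_mem_radical_of_mul_add_mul_mem {a b c d : R} (h : a * b + c * d ∈ J)
    (hcb : c * b ∈ J) : a * b ∈ J.radical ∧ c * d ∈ J.radical := by
  have hab : a * b ∈ J.radical :=
    ⟨2, by
      rw [show (a * b) ^ 2 = a * b * (a * b + c * d) - a * d * (c * b) by ring]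
      exact J.sub_mem (J.mul_mem_left _ h) (J.mul_mem_left _ hcb)⟩
  refine ⟨hab, ?_⟩
  simpa using J.radical.sub_mem (J.le_radical h) hab

theorem mul_mem_radical_of_mul_sq_sub_sq_mul_mem {a b c d : R} (h : a * b ^ 2 - c ^ 2 * d ∈ J)
    (hcb : c * b ∈ J) : a * b ∈ J.radical ∧ c * d ∈ J.radical :=
  ⟨⟨3, by
    rw [show (a * b) ^ 3 = a ^ 2 * b * (a * b ^ 2 - c ^ 2 * d) + a ^ 2 * c * d * (c * b) by ring]
    exact J.add_mem (J.mul_mem_left _ h) (J.mul_mem_left _ hcb)⟩,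
   ⟨3, by
    rw [show (c * d) ^ 3 = a * b * d ^ 2 * (c * b) - c * d ^ 2 * (a * b ^ 2 - c ^ 2 * d) by ring]
    exact J.sub_mem (J.mul_mem_left _ hcb) (J.mul_mem_left _ h)⟩⟩

end Ideal

open Ideal

theorem P₁_eq_ker :
    P₁ = RingHom.ker (zeroVars ({4, 0} : Set (Fin 9)) : MvPolynomial _ ℂ →ₐ[ℂ] _) := by
  rw [ker_zeroVars, P₁, Set.image_pair]

theorem P₂_eq_ker :
    P₂ = RingHom.ker (zeroVars ({8, 4, 7, 5} : Set (Fin 9)) : MvPolynomial _ ℂ →ₐ[ℂ] _) := by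
  rw [ker_zeroVars, P₂]; simp [Set.image_insert_eq]

theorem P₃_eq_ker :
    P₃ = RingHom.ker (zeroVars ({8, 0, 3, 1} : Set (Fin 9)) : MvPolynomial _ ℂ →ₐ[ℂ] _) := by
  rw [ker_zeroVars, P₃]; simp [Set.image_insert_eq]

theorem I_le_P₁ : I ≤ P₁ := by
  simp [I, P₁_eq_ker, span_le, Set.insert_subset_iff, zeroVars]

theorem I_le_P₂ : I ≤ P₂ := by
  simp [I, P₂_eq_ker, span_le, Set.insert_subset_iff, zeroVars]

theorem I_le_P₃ : I ≤ P₃ := by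
  simp [I, P₃_eq_ker, span_le, Set.insert_subset_iff, zeroVars]

theorem P₁_mul_P₂_mul_P₃_le_radical : P₁ * P₂ * P₃ ≤ I.radical := by
  have g1 : X 4 * X 8 ∈ I := subset_span (by simp)
  have g2 : X 0 * X 8 ∈ I := subset_span (by simp)
  have g3 : X 3 * X 4 + X 0 * X 7 ∈ I := subset_span (by simp)
  have g4 : X 0 * X 4 ∈ I := subset_span (by simp)
  have g5 : X 1 * X 4 ^ 2 - X 0 ^ 2 * X 5 ∈ I := subset_span (by simp)
  have h₅ : span {X 4} * P₃ ≤ I.radical := by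
    simp only [P₃, span_singleton_mul_span_le_iff, Set.mem_insert_iff, Set.mem_singleton_iff,
      forall_eq_or_imp, forall_eq]
    refine ⟨le_radical g1, ?_, ?_, ?_⟩ <;> rw [mul_comm]
    exacts [le_radical g4, (mul_mem_radical_of_mul_add_mul_mem g3 g4).1,
      (mul_mem_radical_of_mul_sq_sub_sq_mul_mem g5 g4).1]
  have h₁ : span {X 0} * P₂ ≤ I.radical := by
    simp only [P₂, span_singleton_mul_span_le_iff, Set.mem_insert_iff, Set.mem_singleton_iff,
      forall_eq_or_imp, forall_eq]
    exact ⟨le_radical g2, le_radical g4, (mul_mem_radical_of_mul_add_mul_mem g3 g4).2,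
      (mul_mem_radical_of_mul_sq_sub_sq_mul_mem g5 g4).2⟩
  rw [P₁, span_insert, Ideal.sup_mul, Ideal.sup_mul]
  exact sup_le ((mul_mono_left mul_le_left).trans h₅) (mul_le_left.trans h₁)

/-- The radical of `I` is the intersection of the three prime ideals
`P₁ = (t₅,t₁)`, `P₂ = (t₉,t₅,t₈,t₆)`, `P₃ = (t₉,t₁,t₄,t₂)`. -/
theorem radical_eq_inter_of_three_primes :
    I.radical = P₁ ⊓ P₂ ⊓ P₃ ∧ P₁.IsPrime ∧ P₂.IsPrime ∧ P₃.IsPrime := by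
  have h₁ : P₁.IsPrime := P₁_eq_ker ▸ RingHom.ker_isPrime _
  have h₂ : P₂.IsPrime := P₂_eq_ker ▸ RingHom.ker_isPrime _
  have h₃ : P₃.IsPrime := P₃_eq_ker ▸ RingHom.ker_isPrime _
  refine ⟨le_antisymm ?_ ?_, h₁, h₂, h₃⟩
  · exact le_inf (le_inf (h₁.radical_le_iff.2 I_le_P₁) (h₂.radical_le_iff.2 I_le_P₂))
      (h₃.radical_le_iff.2 I_le_P₃)
  · calc P₁ ⊓ P₂ ⊓ P₃ = (P₁ * P₂ * P₃).radical := by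
          rw [radical_mul, radical_mul, h₁.radical, h₂.radical, h₃.radical]
      _ ≤ I.radical.radical := radical_mono P₁_mul_P₂_mul_P₃_le_radical
      _ = I.radical := radical_idem I
end
end

section
/- The ideal I = (t₅t₉, t₁t₉, t₄t₅ + t₁t₈, t₁t₅, t₂t₅² − t₁²t₆) in ℂ[t₁,…,t₉] is not a radical ideal, i.e. there exists f ∈ ℂ[t₁,…,t₉] with f² ∈ I but f ∉ I. -/
noncomputable section

open MvPolynomial

lemma eps_ne_zero' : (DualNumber.eps : DualNumber ℂ) ≠ 0 := by
  intro h
  have h1 := congrArg TrivSqZeroExt.snd h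
  rw [DualNumber.snd_eps, TrivSqZeroExt.snd_zero] at h1
  exact one_ne_zero h1

/-- `I` is not a radical ideal: there is `f` with `f² ∈ I` but `f ∉ I`. -/
theorem ideal_not_radical :
    ∃ f : MvPolynomial (Fin 9) ℂ, f ^ 2 ∈ I ∧ f ∉ I := by
  refine ⟨X 0 * X 7, ?_, ?_⟩
  · have h1 : (X 3 * X 4 + X 0 * X 7 : MvPolynomial (Fin 9) ℂ) ∈ I :=
      Ideal.subset_span (by simp [I])
    have h2 : (X 0 * X 4 : MvPolynomial (Fin 9) ℂ) ∈ I :=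
      Ideal.subset_span (by simp [I])
    have key : (X 0 * X 7 : MvPolynomial (Fin 9) ℂ) ^ 2 =
        (X 0 * X 7) * (X 3 * X 4 + X 0 * X 7) - (X 3 * X 7) * (X 0 * X 4) := by ring
    rw [key]
    exact sub_mem (Ideal.mul_mem_left _ _ h1) (Ideal.mul_mem_left _ _ h2)
  · intro hmem
    have hε2 : (DualNumber.eps : DualNumber ℂ) * DualNumber.eps = 0 :=
      DualNumber.eps_mul_eps
    set v : Fin 9 → DualNumber ℂ :=
      fun i => if i = 0 then DualNumber.eps else if i = 3 then -1
        else if i = 4 then DualNumber.eps else if i = 7 then 1 else 0 with hv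
    have hspan : I ≤ RingHom.ker (aeval v).toRingHom := by
      rw [I, Ideal.span_le]
      intro p hp
      simp only [Set.mem_insert_iff, Set.mem_singleton_iff] at hp
      rcases hp with rfl | rfl | rfl | rfl | rfl <;>
        simp [RingHom.mem_ker, hv, hε2, pow_two, mul_assoc]
    have h0 : (aeval v) (X (0 : Fin 9) * X (7 : Fin 9)) = 0 := hspan hmem
    have hε0 : (DualNumber.eps : DualNumber ℂ) = 0 := by simpa [hv] using h0
    exact eps_ne_zero' hε0
end
end

section
/- Let X be a smooth projective surface, B an effective divisor, and Z′ an irreducible curve on X with h⁰(X, O_X(Z′)) = 1, H²(X, O_X(Z′)) = 0, Z′ · B ≥ 0, and Euler characteristic χ(X, O_X(Z′)) = χ(O_X) + (Z′² + Z′ · B)/2 with χ(O_X) = 1 and −K_X ∼ B. If moreover Z′ is not contracted by any birational morphism to a smooth surface as a (−1)-curve (i.e., Z′² ≠ −1 or K_X·Z′ ≠ −1), then either Z′ is a smooth rational curve with Z′² = −2 and Z′·B = 0, or Z′² = Z′·B = 0 and ω_{Z′} ≅ O_{Z′}. -/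
/-- Numerical dichotomy from the proof of Theorem 3.5, (2) ⟹ (3). On a smooth
projective surface `X` with `χ(O_X) = 1` and anticanonical cycle `B`
(`−K_X ∼ B`), let `Z′` be an irreducible curve with `h⁰(O_X(Z′)) = 1`,
`h²(O_X(Z′)) = 0`, `Z′·B ≥ 0`. Writing `Z2 = Z′²`, `ZB = Z′·B`,
`pa = p_a(Z′) ≥ 0`, `h0, h1, h2, chi` for the cohomology of `O_X(Z′)`,
Riemann–Roch gives `2·chi = 2 + Z2 + ZB` and adjunction gives
`2·pa − 2 = Z2 − ZB`. If `Z′` is not a `(−1)`-curve (`Z2 ≠ −1` or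
`K_X·Z′ = −ZB ≠ −1`), then either `Z′` is a smooth rational curve
(`pa = 0`) with `Z2 = −2` and `ZB = 0`, or `Z2 = ZB = 0` and `ω_{Z′} ≅ O_{Z′}`
(`pa = 1`). -/
theorem minus_two_curve_dichotomy
    (h0 h1 h2 chi Z2 ZB pa : ℤ)
    (hh0 : h0 = 1) (hh1 : 0 ≤ h1) (hh2 : h2 = 0)
    (hchi : chi = h0 - h1 + h2)
    (hRR : 2 * chi = 2 + Z2 + ZB)
    (hZB : 0 ≤ ZB) (hpa : 0 ≤ pa)
    (hadj : 2 * pa - 2 = Z2 - ZB)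
    (hnotminus1 : Z2 ≠ -1 ∨ -ZB ≠ -1) :
    (pa = 0 ∧ Z2 = -2 ∧ ZB = 0) ∨ (Z2 = 0 ∧ ZB = 0 ∧ pa = 1) := by
  omega
end
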